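/- arXiv:1301.2130 — 4 statements merged into one kernel-verified Lean document; each statement's English description precedes it below -/
import Mathlib

section
/- Assume that τ_v = τ for all v ∈ V with τ < ‖A_v‖₂⁻² for every v ∈ V. Then for any initial condition X(0) ∈ ℝ^{n×|V|}, the DISTA sequence defined by X(t+1) = ΓX(t) satisfies lim_{t→∞} ‖X(t) − X⋆‖_F = 0 for some X⋆ ∈ ℝ^{n×|V|} which is a fixed point of Γ (i.e., ΓX⋆ = X⋆). -/
open Finset Filter Matrix

/-- Euclidean norm on `ℝ^k`. -/
noncomputable def enorm2 {k : ℕ} (x : Fin k → ℝ) : ℝ := Real.sqrt (∑ i, (x i) ^ 2)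

/-- ℓ¹ norm on `ℝ^k`. -/
noncomputable def onenorm {k : ℕ} (x : Fin k → ℝ) : ℝ := ∑ i, |x i|

/-- Operator norm of a matrix induced by Euclidean norms. -/
noncomputable def opNorm {m n : ℕ} (A : Matrix (Fin m) (Fin n) ℝ) : ℝ :=
  sSup {c : ℝ | ∃ z : Fin n → ℝ, z ≠ 0 ∧ c = enorm2 (A.mulVec z) / enorm2 z}

/-- Soft thresholding operator `η_α`, acting componentwise. -/
noncomputable def eta {k : ℕ} (α : ℝ) (x : Fin k → ℝ) : Fin k → ℝ :=
  fun i => if α < |x i| then Real.sign (x i) * (|x i| - α) else 0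

/-- The uniform-weights stochastic matrix adapted to the graph `E`
(`d` is the common degree). -/
noncomputable def Pmat {V : Type*} (E : V → V → Prop) [DecidableRel E] (d : ℕ) :
    V → V → ℝ := fun u w => if E u w then 1 / (d : ℝ) else 0

/-- Column `v` of `X Pᵀ`, i.e. the `P`-weighted average `∑ w P_{v,w} x_w`. -/
noncomputable def avg {n : ℕ} {V : Type*} [Fintype V] (P : V → V → ℝ)
    (X : V → Fin n → ℝ) : V → Fin n → ℝ := fun v i => ∑ w, P v w * X w i

/-- Frobenius norm of `X ∈ ℝ^{n×|V|}` (columns indexed by `V`). -/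
noncomputable def frobNorm {n : ℕ} {V : Type*} [Fintype V] (X : V → Fin n → ℝ) : ℝ :=
  Real.sqrt (∑ v, ∑ i, (X v i) ^ 2)

/-- The distributed Lasso functional `F`. -/
noncomputable def Flasso {n m : ℕ} {V : Type*} [Fintype V] (P : V → V → ℝ)
    (A : V → Matrix (Fin m) (Fin n) ℝ) (y : V → Fin m → ℝ)
    (q α : ℝ) (τ : V → ℝ) (X : V → Fin n → ℝ) : ℝ :=
  ∑ v, (q * enorm2 (y v - (A v).mulVec (X v)) ^ 2 + (2 * α / τ v) * onenorm (X v)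
    + ((1 - q) / τ v) * ∑ w, P v w * enorm2 (avg P X w - X v) ^ 2)

/-- The DISTA operator `Γ`, defined columnwise. -/
noncomputable def Gamma {n m : ℕ} {V : Type*} [Fintype V] (P : V → V → ℝ)
    (A : V → Matrix (Fin m) (Fin n) ℝ) (y : V → Fin m → ℝ)
    (q α : ℝ) (τ : V → ℝ) (X : V → Fin n → ℝ) : V → Fin n → ℝ :=
  fun v => eta α (fun i =>
    (1 - q) * avg P (avg P X) v i
      + q * (X v i + τ v * ((A v)ᵀ.mulVec (y v - (A v).mulVec (X v)) i)))

/-- The surrogate functional `F^S`. -/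
noncomputable def FS {n m : ℕ} {V : Type*} [Fintype V] (E : V → V → Prop) [DecidableRel E]
    (d : ℕ) (A : V → Matrix (Fin m) (Fin n) ℝ) (y : V → Fin m → ℝ)
    (q α : ℝ) (τ : V → ℝ) (X C B : V → Fin n → ℝ) : ℝ :=
  ∑ v, (q * enorm2 ((A v).mulVec (X v) - y v) ^ 2 + (2 * α / τ v) * onenorm (X v)
    + ((1 - q) / ((d : ℝ) * τ v)) *
        ∑ w ∈ Finset.univ.filter (fun w => E v w), enorm2 (X v - C w) ^ 2
    + (q / τ v) * enorm2 (X v - B v) ^ 2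
    - q * enorm2 ((A v).mulVec (X v - B v)) ^ 2)

/-!
DISTA is a proximal-gradient (forward–backward) iteration. Viewing `X` as a point of the
Frobenius space, `Γ x = η_α (M x + c)` with `M = (1 - q) P² + q (1 - τ AᵀA)` and `c = q τ Aᵀ y`.
Double stochasticity of `P` and `τ ‖A_v‖² ≤ 1` give `0 ≤ M ≤ 1` in the Loewner order, and `η_α`
is the proximal map of `α ‖·‖₁`. Hence `Γ` is nonexpansive and decreases the coercive objective
`½ ⟪(1 - M) x, x⟫ - ⟪c, x⟫ + α ‖x‖₁` by at least `½ ‖Γ x - x‖²`. The orbit thus stays in a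
compact set and its steps tend to zero, so a limit point of the orbit is a fixed point; by
nonexpansiveness the distance to that fixed point is monotone, so the whole orbit converges to it.
-/

open scoped RealInnerProductSpace Topology
open Function (IsFixedPt)

section Iteration

variable {X : Type*} [MetricSpace X] {T : X → X}

lemma tendsto_dist_iterate_succ_of_descent {Φ : X → ℝ} {κ : ℝ} (hκ : 0 < κ)
    (hbdd : BddBelow (Set.range Φ)) (hdesc : ∀ x, Φ (T x) + κ * dist (T x) x ^ 2 ≤ Φ x) (x : X) :
    Tendsto (fun t => dist (T (T^[t] x)) (T^[t] x)) atTop (𝓝 0) := by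
  set u : ℕ → ℝ := fun t => Φ (T^[t] x)
  have hstep : ∀ t, dist (T (T^[t] x)) (T^[t] x) ^ 2 ≤ (u t - u (t + 1)) / κ := fun t => by
    rw [le_div_iff₀ hκ]
    have := hdesc (T^[t] x)
    simp only [u, Function.iterate_succ_apply']
    linarith
  have hanti : Antitone u := antitone_nat_of_succ_le fun t => by
    have := hdesc (T^[t] x)
    simp only [u, Function.iterate_succ_apply']
    nlinarith [sq_nonneg (dist (T (T^[t] x)) (T^[t] x))]
  have hu := tendsto_atTop_ciInf hanti (hbdd.mono (Set.range_comp_subset_range _ Φ))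
  have hsq : Tendsto (fun t => dist (T (T^[t] x)) (T^[t] x) ^ 2) atTop (𝓝 0) :=
    squeeze_zero (fun t => sq_nonneg _) hstep
      (by simpa using (hu.sub (hu.comp (tendsto_add_atTop_nat 1))).div_const κ)
  have := (Real.continuous_sqrt.tendsto 0).comp hsq
  simpa only [Function.comp_def, Real.sqrt_sq dist_nonneg, Real.sqrt_zero] using this

lemma exists_isCompact_forall_iterate_mem {Φ : X → ℝ} (hΦ : Tendsto Φ (cocompact X) atTop)
    (hdesc : ∀ x, Φ (T x) ≤ Φ x) (x : X) : ∃ K, IsCompact K ∧ ∀ t, T^[t] x ∈ K := by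
  obtain ⟨K, hK, hKc⟩ := mem_cocompact.1 (hΦ.eventually (eventually_gt_atTop (Φ x)))
  have hanti : Antitone fun t => Φ (T^[t] x) := antitone_nat_of_succ_le fun t => by
    simpa only [Function.iterate_succ_apply'] using hdesc (T^[t] x)
  exact ⟨K, hK, fun t => not_not.1 fun ht =>
    (show Φ x < Φ (T^[t] x) from hKc ht).not_ge (hanti (Nat.zero_le t))⟩

lemma LipschitzWith.tendsto_iterate_of_tendsto_subseq (hT : LipschitzWith 1 T) {a x : X}
    (ha : IsFixedPt T a) {φ : ℕ → ℕ} (hφ : StrictMono φ)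
    (hsub : Tendsto (fun k => T^[φ k] x) atTop (𝓝 a)) :
    Tendsto (fun t => T^[t] x) atTop (𝓝 a) := by
  have hanti : Antitone fun t => dist (T^[t] x) a := antitone_nat_of_succ_le fun t => by
    simpa [Function.iterate_succ_apply', ha.eq] using hT.dist_le_mul (T^[t] x) a
  have hinf := tendsto_atTop_ciInf hanti ⟨0, by rintro _ ⟨t, rfl⟩; exact dist_nonneg⟩
  have hzero := tendsto_nhds_unique (hinf.comp hφ.tendsto_atTop)
    (tendsto_iff_dist_tendsto_zero.1 hsub)
  exact tendsto_iff_dist_tendsto_zero.2 (hzero ▸ hinf)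

theorem exists_isFixedPt_tendsto_iterate_of_descent (hT : LipschitzWith 1 T) {Φ : X → ℝ}
    (hΦ : Tendsto Φ (cocompact X) atTop) (hbdd : BddBelow (Set.range Φ)) {κ : ℝ} (hκ : 0 < κ)
    (hdesc : ∀ x, Φ (T x) + κ * dist (T x) x ^ 2 ≤ Φ x) (x : X) :
    ∃ a, IsFixedPt T a ∧ Tendsto (fun t => T^[t] x) atTop (𝓝 a) := by
  obtain ⟨K, hK, hmem⟩ := exists_isCompact_forall_iterate_mem (T := T) hΦ
    (fun y => by nlinarith [hdesc y, sq_nonneg (dist (T y) y)]) x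
  obtain ⟨a, -, φ, hφ, hsub⟩ := hK.tendsto_subseq hmem
  have hnext : Tendsto (fun k => T (T^[φ k] x)) atTop (𝓝 a) :=
    hsub.congr_dist <| by
      simpa only [Function.comp_def, dist_comm] using
        (tendsto_dist_iterate_succ_of_descent hκ hbdd hdesc x).comp hφ.tendsto_atTop
  have hfix : IsFixedPt T a := tendsto_nhds_unique ((hT.continuous.tendsto a).comp hsub) hnext
  exact ⟨a, hfix, hT.tendsto_iterate_of_tendsto_subseq hfix hφ hsub⟩

end Iteration

section Proximal

variable {E : Type*} [NormedAddCommGroup E] [InnerProductSpace ℝ E]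

/-- `p` is the proximal map of `g`, i.e. `p w` minimizes `g u + ‖u - w‖² / 2`, in variational
form. -/
def IsProxMap (g : E → ℝ) (p : E → E) : Prop :=
  ∀ w u, ⟪w - p w, u - p w⟫ ≤ g u - g (p w)

lemma IsProxMap.lipschitzWith {g : E → ℝ} {p : E → E} (hp : IsProxMap g p) :
    LipschitzWith 1 p := by
  refine LipschitzWith.of_dist_le_mul fun w w' => ?_
  rw [NNReal.coe_one, one_mul, dist_eq_norm, dist_eq_norm]
  have hfirm : ‖p w - p w'‖ ^ 2 ≤ ⟪w - w', p w - p w'⟫ := by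
    have h := add_le_add (hp w (p w')) (hp w' (p w))
    have hsq := real_inner_self_eq_norm_sq (p w - p w')
    simp only [inner_sub_left, inner_sub_right, real_inner_comm] at h hsq ⊢
    linarith
  have hcs := real_inner_le_norm (w - w') (p w - p w')
  nlinarith [norm_nonneg (p w - p w'), norm_nonneg (w - w')]

lemma IsProxMap.piLp {ι : Type*} [Fintype ι] {β : ι → Type*} [∀ i, NormedAddCommGroup (β i)]
    [∀ i, InnerProductSpace ℝ (β i)] {g : ∀ i, β i → ℝ} {p : ∀ i, β i → β i}
    (hp : ∀ i, IsProxMap (g i) (p i)) :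
    IsProxMap (fun x : PiLp 2 β => ∑ i, g i (x i)) (fun x => WithLp.toLp 2 fun i => p i (x i)) := by
  intro w u
  simp only [PiLp.inner_apply, PiLp.sub_apply, ← Finset.sum_sub_distrib]
  exact Finset.sum_le_sum fun i _ => hp i (w i) (u i)

lemma LinearMap.IsPositive.inner_map_sq_le {T : E →ₗ[ℝ] E} (hT : T.IsPositive) (x y : E) :
    ⟪T x, y⟫ ^ 2 ≤ ⟪T x, x⟫ * ⟪T y, y⟫ := by
  have hquad : ∀ t : ℝ, 0 ≤ ⟪T y, y⟫ * (t * t) + 2 * ⟪T x, y⟫ * t + ⟪T x, x⟫ := fun t => by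
    have h := hT.inner_nonneg_left (x + t • y)
    have hsymm := hT.isSymmetric x y
    simp only [map_add, map_smul, inner_add_left, inner_add_right, real_inner_smul_left,
      real_inner_smul_right, real_inner_comm x (T y)] at h hsymm ⊢
    rw [← hsymm] at h
    linarith
  have := discrim_le_zero hquad
  rw [discrim] at this
  nlinarith

lemma LinearMap.inner_map_self_le_of_le_one {T : E →ₗ[ℝ] E} (h1 : T ≤ 1) (x : E) :
    ⟪T x, x⟫ ≤ ‖x‖ ^ 2 := by
  have := ((LinearMap.le_def _ _).1 h1).inner_nonneg_left x
  simp only [LinearMap.sub_apply, Module.End.one_apply, inner_sub_left,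
    real_inner_self_eq_norm_sq] at this
  linarith

lemma LinearMap.IsPositive.norm_map_le {T : E →ₗ[ℝ] E} (hT : T.IsPositive) (h1 : T ≤ 1)
    (x : E) : ‖T x‖ ≤ ‖x‖ := by
  -- Cauchy–Schwarz for `⟪T ·, ·⟫`: `‖T x‖⁴ ≤ ⟪T x, x⟫ ⟪T (T x), T x⟫ ≤ ‖x‖² ‖T x‖²`.
  have hcs := hT.inner_map_sq_le x (T x)
  rw [real_inner_self_eq_norm_sq] at hcs
  have : ‖T x‖ ^ 2 ≤ ‖x‖ ^ 2 := by
    nlinarith [hT.inner_nonneg_left x, hT.inner_nonneg_left (T x), sq_nonneg (‖T x‖ ^ 2),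
      inner_map_self_le_of_le_one h1 x, inner_map_self_le_of_le_one h1 (T x)]
  exact (pow_le_pow_iff_left₀ (norm_nonneg _) (norm_nonneg _) two_ne_zero).1 this

lemma IsProxMap.lipschitzWith_comp_add {g : E → ℝ} {p : E → E} (hp : IsProxMap g p)
    {M : E →ₗ[ℝ] E} (hM : M.IsPositive) (hM1 : M ≤ 1) (c : E) :
    LipschitzWith 1 fun x => p (M x + c) := by
  have haff : LipschitzWith 1 fun x => M x + c := LipschitzWith.of_dist_le_mul fun x x' => by
    simpa [dist_eq_norm, ← map_sub] using hM.norm_map_le hM1 (x - x')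
  have h := hp.lipschitzWith.comp haff
  rwa [one_mul] at h

lemma LinearMap.smul_adjoint_comp_self_le_one {F : Type*} [NormedAddCommGroup F]
    [InnerProductSpace ℝ F] [FiniteDimensional ℝ E] [FiniteDimensional ℝ F] (S : E →ₗ[ℝ] F)
    {c : ℝ} (hS : ∀ x, c * ‖S x‖ ^ 2 ≤ ‖x‖ ^ 2) : c • (S.adjoint ∘ₗ S) ≤ 1 := by
  refine (LinearMap.le_def _ _).2 ⟨LinearMap.IsSymmetric.id.sub
    ((S.isPositive_adjoint_comp_self).isSymmetric.smul (IsSelfAdjoint.all c)), fun x => ?_⟩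
  simp only [LinearMap.sub_apply, Module.End.one_apply, LinearMap.smul_apply,
    LinearMap.comp_apply, inner_sub_left, real_inner_smul_left, LinearMap.adjoint_inner_left,
    real_inner_self_eq_norm_sq, RCLike.re_to_real]
  linarith [hS x]

/-- The objective `f + g` with `f x = ½⟪(1 - M) x, x⟫ - ⟪c, x⟫`, so that `x - ∇f x = M x + c`. -/
noncomputable def proxGradObjective (M : E →ₗ[ℝ] E) (c : E) (g : E → ℝ) (x : E) : ℝ :=
  (‖x‖ ^ 2 - ⟪M x, x⟫) / 2 - ⟪c, x⟫ + g x

lemma IsProxMap.proxGradObjective_add_le {g : E → ℝ} {p : E → E} (hp : IsProxMap g p)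
    {M : E →ₗ[ℝ] E} (hM : M.IsPositive) (c x : E) :
    proxGradObjective M c g (p (M x + c)) + ‖p (M x + c) - x‖ ^ 2 / 2
      ≤ proxGradObjective M c g x := by
  obtain ⟨d, hd⟩ : ∃ d, p (M x + c) = x + d := ⟨_, (add_sub_cancel x _).symm⟩
  have hprox := hp (M x + c) x
  have hMd := hM.inner_nonneg_left d
  have hsymm := hM.isSymmetric x d
  rw [hd] at hprox ⊢
  unfold proxGradObjective
  simp only [add_sub_cancel_left, sub_add_cancel_left, map_add, inner_add_left, inner_add_right,
    inner_sub_left, inner_neg_right, norm_add_sq_real, real_inner_self_eq_norm_sq] at hprox ⊢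
  rw [real_inner_comm x (M d), ← hsymm]
  linarith

end Proximal

/-- `ℝ^{n×|V|}` with the Frobenius inner product: one Euclidean column per node. -/
abbrev FrobSpace (V : Type*) (n : ℕ) := PiLp 2 fun _ : V => EuclideanSpace ℝ (Fin n)

section FrobSpace

variable {V : Type*} {n m : ℕ}

def frobEquiv : (V → Fin n → ℝ) ≃ FrobSpace V n where
  toFun X := WithLp.toLp 2 fun v => WithLp.toLp 2 (X v)
  invFun x v := x v
  left_inv _ := rfl
  right_inv _ := rfl

@[simp] lemma frobEquiv_apply (X : V → Fin n → ℝ) (v : V) : (frobEquiv X v).ofLp = X v := rfl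

noncomputable def blockMulVec (A : V → Matrix (Fin m) (Fin n) ℝ) :
    FrobSpace V n →ₗ[ℝ] FrobSpace V m where
  toFun x := WithLp.toLp 2 fun v => WithLp.toLp 2 (A v *ᵥ x v)
  map_add' x y := by ext v i; simp [Matrix.mulVec_add]
  map_smul' c x := by ext v i; simp [Matrix.mulVec_smul]

@[simp] lemma blockMulVec_apply (A : V → Matrix (Fin m) (Fin n) ℝ) (x : FrobSpace V n) (v : V) :
    blockMulVec A x v = WithLp.toLp 2 (A v *ᵥ x v) := rfl

variable [Fintype V]

lemma frobNorm_sub (X Y : V → Fin n → ℝ) :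
    frobNorm (X - Y) = dist (frobEquiv X) (frobEquiv Y) := by
  rw [frobNorm, dist_eq_norm, ← Real.sqrt_sq (norm_nonneg _), PiLp.norm_sq_eq_of_L2]
  congr 1
  refine Finset.sum_congr rfl fun v _ => ?_
  rw [EuclideanSpace.norm_sq_eq]
  simp

lemma PiLp.norm_le_sum_norm {ι : Type*} [Fintype ι] {β : ι → Type*}
    [∀ i, SeminormedAddCommGroup (β i)] (x : PiLp 2 β) : ‖x‖ ≤ ∑ i, ‖x i‖ := by
  rw [← pow_le_pow_iff_left₀ (norm_nonneg _) (Finset.sum_nonneg fun i _ => norm_nonneg _)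
    two_ne_zero, PiLp.norm_sq_eq_of_L2]
  exact Finset.sum_sq_le_sq_sum_of_nonneg fun i _ => norm_nonneg _

lemma norm_le_sum_abs (x : FrobSpace V n) : ‖x‖ ≤ ∑ v, ∑ i, |x v i| :=
  (PiLp.norm_le_sum_norm x).trans <| Finset.sum_le_sum fun v _ =>
    (PiLp.norm_le_sum_norm (x v)).trans_eq <| by simp only [Real.norm_eq_abs]

noncomputable def avgOp (P : V → V → ℝ) : FrobSpace V n →ₗ[ℝ] FrobSpace V n where
  toFun x := WithLp.toLp 2 fun v => ∑ w, P v w • x w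
  map_add' x y := by ext v i; simp [Finset.sum_add_distrib]
  map_smul' c x := by ext v i; simp [Finset.mul_sum, mul_left_comm]

@[simp] lemma avgOp_apply (P : V → V → ℝ) (x : FrobSpace V n) (v : V) (i : Fin n) :
    avgOp P x v i = ∑ w, P v w * x w i := by
  simp [avgOp]

lemma avgOp_isSymmetric {P : V → V → ℝ} (hP : ∀ v w, P v w = P w v) :
    (avgOp (n := n) P).IsSymmetric := fun x y => by
  rw [PiLp.inner_apply, PiLp.inner_apply]
  simp only [avgOp, LinearMap.coe_mk, AddHom.coe_mk, sum_inner, inner_sum, real_inner_smul_left,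
    real_inner_smul_right]
  rw [Finset.sum_comm]
  exact Finset.sum_congr rfl fun v _ => Finset.sum_congr rfl fun w _ => by
    rw [hP, real_inner_comm]

lemma norm_avgOp_le {P : V → V → ℝ} (hnn : ∀ v w, 0 ≤ P v w) (hrow : ∀ v, ∑ w, P v w = 1)
    (hcol : ∀ w, ∑ v, P v w = 1) (x : FrobSpace V n) : ‖avgOp P x‖ ≤ ‖x‖ := by
  have hjensen : ∀ v, ‖∑ w, P v w • x w‖ ^ 2 ≤ ∑ w, P v w * ‖x w‖ ^ 2 := fun v =>
    ((convexOn_univ_norm.pow (fun _ _ => norm_nonneg _) 2).map_sum_le (fun w _ => hnn v w)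
      (hrow v) fun _ _ => Set.mem_univ _)
  rw [← pow_le_pow_iff_left₀ (norm_nonneg _) (norm_nonneg _) two_ne_zero,
    PiLp.norm_sq_eq_of_L2, PiLp.norm_sq_eq_of_L2]
  calc ∑ v, ‖avgOp P x v‖ ^ 2 ≤ ∑ v, ∑ w, P v w * ‖x w‖ ^ 2 :=
        Finset.sum_le_sum fun v _ => hjensen v
    _ = ∑ w, ‖x w‖ ^ 2 := by
        rw [Finset.sum_comm]
        simp only [← Finset.sum_mul, hcol, one_mul]

lemma blockMulVec_adjoint (A : V → Matrix (Fin m) (Fin n) ℝ) :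
    (blockMulVec A).adjoint = blockMulVec fun v => (A v)ᵀ := by
  refine ((LinearMap.eq_adjoint_iff _ _).2 fun z x => ?_).symm
  rw [PiLp.inner_apply, PiLp.inner_apply]
  refine Finset.sum_congr rfl fun v _ => ?_
  simp only [blockMulVec_apply, EuclideanSpace.inner_eq_star_dotProduct, star_trivial,
    Matrix.dotProduct_mulVec, Matrix.vecMul_transpose]

lemma enorm2_eq_norm {k : ℕ} (x : Fin k → ℝ) :
    enorm2 x = ‖(WithLp.toLp 2 x : EuclideanSpace ℝ (Fin k))‖ := by
  simp [enorm2, EuclideanSpace.norm_eq]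

lemma norm_mulVec_le_opNorm (A : Matrix (Fin m) (Fin n) ℝ) (x : EuclideanSpace ℝ (Fin n)) :
    ‖(WithLp.toLp 2 (A *ᵥ x) : EuclideanSpace ℝ (Fin m))‖ ≤ opNorm A * ‖x‖ := by
  rcases eq_or_ne x 0 with rfl | hx
  · simp
  set f := LinearMap.toContinuousLinearMap (Matrix.toLpLin 2 2 A)
  have hbdd : BddAbove {c : ℝ | ∃ z : Fin n → ℝ, z ≠ 0 ∧ c = enorm2 (A *ᵥ z) / enorm2 z} := by
    refine ⟨‖f‖, ?_⟩
    rintro _ ⟨z, -, rfl⟩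
    rw [enorm2_eq_norm, enorm2_eq_norm]
    exact div_le_of_le_mul₀ (norm_nonneg _) (norm_nonneg _) (f.le_opNorm (WithLp.toLp 2 z))
  rw [← div_le_iff₀ (norm_pos_iff.2 hx)]
  refine le_csSup hbdd ⟨x, fun h => hx (by ext i; simp [h]), ?_⟩
  rw [enorm2_eq_norm, enorm2_eq_norm]

lemma mul_norm_blockMulVec_sq_le (A : V → Matrix (Fin m) (Fin n) ℝ) {τ : ℝ} (hτ : 0 ≤ τ)
    (hτA : ∀ v, τ * opNorm (A v) ^ 2 ≤ 1) (x : FrobSpace V n) :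
    τ * ‖blockMulVec A x‖ ^ 2 ≤ ‖x‖ ^ 2 := by
  rw [PiLp.norm_sq_eq_of_L2, PiLp.norm_sq_eq_of_L2, Finset.mul_sum]
  refine Finset.sum_le_sum fun v _ => ?_
  calc τ * ‖blockMulVec A x v‖ ^ 2 ≤ τ * (opNorm (A v) * ‖x v‖) ^ 2 := by
        gcongr
        exact norm_mulVec_le_opNorm (A v) (x v)
    _ = (τ * opNorm (A v) ^ 2) * ‖x v‖ ^ 2 := by ring
    _ ≤ ‖x v‖ ^ 2 := mul_le_of_le_one_left (sq_nonneg _) (hτA v)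

noncomputable def softThreshold (α t : ℝ) : ℝ :=
  if α < |t| then Real.sign t * (|t| - α) else 0

lemma isProxMap_softThreshold {α : ℝ} (hα : 0 ≤ α) :
    IsProxMap (fun t => α * |t|) (softThreshold α) := by
  intro w u
  have hu := abs_nonneg u
  simp only [softThreshold, RCLike.inner_apply, conj_trivial]
  split_ifs with h
  · rcases lt_trichotomy w 0 with hw | rfl | hw
    · rw [abs_of_neg hw] at h
      rw [Real.sign_of_neg hw, abs_of_neg hw, abs_of_neg (by linarith : -1 * (-w - α) < 0)]
      nlinarith [neg_abs_le u]
    · rw [abs_zero] at h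
      linarith
    · rw [abs_of_pos hw] at h
      rw [Real.sign_of_pos hw, abs_of_pos hw, abs_of_pos (by linarith : 0 < 1 * (w - α))]
      nlinarith [le_abs_self u]
  · rw [not_lt] at h
    simp only [sub_zero, abs_zero, mul_zero]
    nlinarith [le_abs_self (u * w), abs_mul u w, mul_le_mul_of_nonneg_left h hu]

noncomputable def softThresholdFrob (α : ℝ) (x : FrobSpace V n) : FrobSpace V n :=
  WithLp.toLp 2 fun v => WithLp.toLp 2 fun i => softThreshold α (x v i)

lemma isProxMap_softThresholdFrob {α : ℝ} (hα : 0 ≤ α) :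
    IsProxMap (fun x : FrobSpace V n => ∑ v, ∑ i, α * |x v i|) (softThresholdFrob α) := by
  have hcol : IsProxMap (fun u : EuclideanSpace ℝ (Fin n) => ∑ i, α * |u i|)
      (fun u => WithLp.toLp 2 fun i => softThreshold α (u i)) :=
    IsProxMap.piLp fun _ => isProxMap_softThreshold hα
  exact IsProxMap.piLp (β := fun _ : V => EuclideanSpace ℝ (Fin n))
    (g := fun _ u => ∑ i, α * |u i|) (p := fun _ u => WithLp.toLp 2 fun i => softThreshold α (u i))
    fun _ => hcol

end FrobSpace

section Dista

variable {V : Type*} [Fintype V] {n m : ℕ} (P : V → V → ℝ) (A : V → Matrix (Fin m) (Fin n) ℝ)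
  (y : V → Fin m → ℝ) (q α τ : ℝ)

noncomputable def distaLin : FrobSpace V n →ₗ[ℝ] FrobSpace V n :=
  (1 - q) • (avgOp P ∘ₗ avgOp P) + q • (1 - τ • ((blockMulVec A).adjoint ∘ₗ blockMulVec A))

noncomputable def distaShift : FrobSpace V n :=
  (q * τ) • (blockMulVec A).adjoint (frobEquiv y)

lemma semiconj_frobEquiv_Gamma :
    Function.Semiconj frobEquiv (Gamma P A y q α fun _ => τ)
      fun x => softThresholdFrob α (distaLin P A q τ x + distaShift A y q τ) := fun X => by
  ext v i
  show softThreshold α _ = softThreshold α _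
  congr 1
  simp only [avg, mulVec_sub, mulVec_mulVec, Pi.sub_apply, distaLin, blockMulVec_adjoint,
    LinearMap.add_apply, LinearMap.smul_apply, LinearMap.coe_comp, Function.comp_apply,
    LinearMap.sub_apply, Module.End.one_apply, distaShift, PiLp.add_apply, PiLp.smul_apply,
    PiLp.sub_apply, blockMulVec_apply, frobEquiv_apply, avgOp_apply, smul_eq_mul]
  ring

lemma one_sub_distaLin :
    1 - distaLin P A q τ = (1 - q) • (1 - avgOp P ∘ₗ avgOp P)
      + (q * τ) • ((blockMulVec A).adjoint ∘ₗ blockMulVec A) := by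
  rw [distaLin, mul_smul]
  module

variable {P A y q τ}

lemma avgOp_comp_self_isPositive (hP : ∀ v w, P v w = P w v) :
    (avgOp (n := n) P ∘ₗ avgOp P).IsPositive := by
  simpa only [(avgOp_isSymmetric hP).adjoint_eq] using
    (avgOp (n := n) P).isPositive_adjoint_comp_self

lemma avgOp_comp_self_le_one (hP : ∀ v w, P v w = P w v) (hnn : ∀ v w, 0 ≤ P v w)
    (hrow : ∀ v, ∑ w, P v w = 1) : avgOp (n := n) P ∘ₗ avgOp P ≤ 1 := by
  have hcol : ∀ w, ∑ v, P v w = 1 := fun w => by simpa only [hP _ w] using hrow w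
  simpa only [one_smul, (avgOp_isSymmetric hP).adjoint_eq] using
    (avgOp (n := n) P).smul_adjoint_comp_self_le_one (c := 1) fun x => by
      simpa using pow_le_pow_left₀ (norm_nonneg _) (norm_avgOp_le hnn hrow hcol x) 2

variable (hP : ∀ v w, P v w = P w v) (hnn : ∀ v w, 0 ≤ P v w) (hrow : ∀ v, ∑ w, P v w = 1)
  (hq0 : 0 ≤ q) (hq1 : q ≤ 1) (hτ : 0 ≤ τ)
include hP hnn hrow hq0 hq1 hτ

omit hnn hrow in
lemma distaLin_isPositive (hτA : ∀ v, τ * opNorm (A v) ^ 2 ≤ 1) :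
    (distaLin P A q τ).IsPositive := by
  have hG1 := (blockMulVec A).smul_adjoint_comp_self_le_one (mul_norm_blockMulVec_sq_le A hτ hτA)
  exact ((avgOp_comp_self_isPositive hP).smul_of_nonneg (sub_nonneg.2 hq1)).add
    (((LinearMap.le_def _ _).1 hG1).smul_of_nonneg hq0)

lemma distaLin_le_one : distaLin P A q τ ≤ 1 := by
  rw [LinearMap.le_def, one_sub_distaLin]
  exact (((LinearMap.le_def _ _).1 (avgOp_comp_self_le_one hP hnn hrow)).smul_of_nonneg
    (sub_nonneg.2 hq1)).add ((blockMulVec A).isPositive_adjoint_comp_self.smul_of_nonneg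
      (mul_nonneg hq0 hτ))

lemma proxGradObjective_dista_ge {α : ℝ} (hα : 0 ≤ α) (x : FrobSpace V n) :
    α * ‖x‖ - q * τ / 2 * ‖frobEquiv y‖ ^ 2 ≤ proxGradObjective (distaLin P A q τ)
      (distaShift A y q τ) (fun x => ∑ v, ∑ i, α * |x v i|) x := by
  have hPP := ((LinearMap.le_def _ _).1 (avgOp_comp_self_le_one hP hnn hrow)).inner_nonneg_left x
  have hquad : ‖x‖ ^ 2 - ⟪distaLin P A q τ x, x⟫
      = (1 - q) * ⟪(1 - avgOp P ∘ₗ avgOp P) x, x⟫ + q * τ * ‖blockMulVec A x‖ ^ 2 := by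
    rw [← real_inner_self_eq_norm_sq, ← inner_sub_left,
      show x - distaLin P A q τ x = (1 - distaLin P A q τ) x from rfl, one_sub_distaLin]
    simp only [LinearMap.add_apply, LinearMap.smul_apply, LinearMap.comp_apply, inner_add_left,
      real_inner_smul_left, LinearMap.adjoint_inner_left, real_inner_self_eq_norm_sq]
  have hshift : ⟪distaShift A y q τ, x⟫ = q * τ * ⟪blockMulVec A x, frobEquiv y⟫ := by
    rw [distaShift, real_inner_smul_left, LinearMap.adjoint_inner_left, real_inner_comm]
  have hsq := mul_nonneg (mul_nonneg hq0 hτ) (sq_nonneg ‖blockMulVec A x - frobEquiv y‖)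
  rw [norm_sub_sq_real] at hsq
  have hl1 : α * ‖x‖ ≤ ∑ v, ∑ i, α * |x v i| := by
    simpa only [Finset.mul_sum] using mul_le_mul_of_nonneg_left (norm_le_sum_abs x) hα
  have hPP' := mul_nonneg (sub_nonneg.2 hq1) hPP
  unfold proxGradObjective
  rw [hquad, hshift]
  nlinarith

theorem exists_isFixedPt_tendsto_iterate_dista {α : ℝ} (hα : 0 < α)
    (hτA : ∀ v, τ * opNorm (A v) ^ 2 ≤ 1) (x₀ : FrobSpace V n) :
    ∃ a, IsFixedPt (fun x => softThresholdFrob α (distaLin P A q τ x + distaShift A y q τ)) a ∧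
      Tendsto (fun t => (fun x => softThresholdFrob α
        (distaLin P A q τ x + distaShift A y q τ))^[t] x₀) atTop (𝓝 a) := by
  have hprox := isProxMap_softThresholdFrob (V := V) (n := n) hα.le
  have hM := distaLin_isPositive (A := A) hP hq0 hq1 hτ hτA
  have hlow := proxGradObjective_dista_ge (A := A) (y := y) hP hnn hrow hq0 hq1 hτ hα.le
  refine exists_isFixedPt_tendsto_iterate_of_descent
    (hprox.lipschitzWith_comp_add hM (distaLin_le_one hP hnn hrow hq0 hq1 hτ) _)
    (tendsto_atTop_mono hlow ?_) ⟨-(q * τ / 2 * ‖frobEquiv y‖ ^ 2), ?_⟩ one_half_pos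
    (fun x => ?_) x₀
  · simpa only [sub_eq_add_neg] using tendsto_atTop_add_const_right _ _
      (tendsto_norm_cocompact_atTop.const_mul_atTop hα)
  · rintro _ ⟨x, rfl⟩
    linarith [hlow x, mul_nonneg hα.le (norm_nonneg x)]
  · have := hprox.proxGradObjective_add_le hM (distaShift A y q τ) x
    rw [dist_eq_norm]
    linarith

end Dista

lemma Pmat_symm {V : Type*} {E : V → V → Prop} [DecidableRel E] {d : ℕ}
    (hsymm : ∀ u v, E u v → E v u) (v w : V) : Pmat E d v w = Pmat E d w v := by
  simp only [Pmat, propext ⟨hsymm v w, hsymm w v⟩]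

lemma Pmat_nonneg {V : Type*} (E : V → V → Prop) [DecidableRel E] (d : ℕ) (v w : V) :
    0 ≤ Pmat E d v w := by
  unfold Pmat
  split_ifs <;> positivity

lemma sum_Pmat {V : Type*} [Fintype V] {E : V → V → Prop} [DecidableRel E] {d : ℕ}
    (hself : ∀ v, E v v) (hreg : ∀ v, (Finset.univ.filter (fun w => E v w)).card = d) (v : V) :
    ∑ w, Pmat E d v w = 1 := by
  have hd : (d : ℝ) ≠ 0 := by
    rw [← hreg v]
    exact Nat.cast_ne_zero.2 (Finset.card_ne_zero.2 ⟨v, by simp [hself]⟩)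
  unfold Pmat
  rw [← Finset.sum_filter, Finset.sum_const, hreg v, nsmul_eq_mul, mul_one_div_cancel hd]

lemma mul_le_one_of_lt_inv {a b : ℝ} (hb : 0 ≤ b) (h : a < b⁻¹) : a * b ≤ 1 := by
  rcases hb.eq_or_lt with rfl | hb
  · simp
  · exact ((lt_inv_mul_iff₀' hb).1 (by simpa using h)).le

theorem dista_convergence_general
    {n m d : ℕ} {V : Type*} [Fintype V]
    (E : V → V → Prop) [DecidableRel E]
    (hself : ∀ v, E v v) (hsymm : ∀ u v, E u v → E v u)
    (hreg : ∀ v, (Finset.univ.filter (fun w => E v w)).card = d)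
    (A : V → Matrix (Fin m) (Fin n) ℝ) (y : V → Fin m → ℝ)
    (q α : ℝ) (hq0 : 0 < q) (hq1 : q < 1) (hα : 0 < α)
    (τ : ℝ) (hτpos : 0 < τ)
    (hτ : ∀ v, τ < (opNorm (A v) ^ 2)⁻¹)
    (X0 : V → Fin n → ℝ) :
    ∃ Xstar : V → Fin n → ℝ,
      Gamma (Pmat E d) A y q α (fun _ => τ) Xstar = Xstar ∧
      Filter.Tendsto
        (fun t => frobNorm ((Gamma (Pmat E d) A y q α (fun _ => τ))^[t] X0 - Xstar))
        Filter.atTop (nhds 0) := by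
  have hτA : ∀ v, τ * opNorm (A v) ^ 2 ≤ 1 := fun v => mul_le_one_of_lt_inv (sq_nonneg _) (hτ v)
  obtain ⟨a, hfix, hlim⟩ := exists_isFixedPt_tendsto_iterate_dista (A := A) (y := y)
    (Pmat_symm hsymm) (Pmat_nonneg E d) (sum_Pmat hself hreg) hq0.le hq1.le hτpos.le hα hτA
    (frobEquiv X0)
  have hconj := semiconj_frobEquiv_Gamma (Pmat E d) A y q α τ
  refine ⟨frobEquiv.symm a, frobEquiv.injective ?_, ?_⟩
  · rw [hconj.eq, Equiv.apply_symm_apply]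
    exact hfix
  · simpa only [frobNorm_sub, (hconj.iterate_right _).eq, Equiv.apply_symm_apply] using
      tendsto_iff_dist_tendsto_zero.1 hlim

/-- Convergence of DISTA. With uniform stepsizes `τ < ‖A_v‖₂⁻²` for all `v`,
for every initial condition the DISTA iterates converge (in Frobenius norm) to a fixed point
of `Γ`. -/
theorem dista_convergence
    {n m d : ℕ} {V : Type*} [Fintype V] [DecidableEq V] [Nonempty V]
    (E : V → V → Prop) [DecidableRel E]
    (hself : ∀ v, E v v) (hsymm : ∀ u v, E u v → E v u)
    (hreg : ∀ v, (Finset.univ.filter (fun w => E v w)).card = d)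
    (A : V → Matrix (Fin m) (Fin n) ℝ) (y : V → Fin m → ℝ)
    (q α : ℝ) (hq0 : 0 < q) (hq1 : q < 1) (hα : 0 < α)
    (τ : ℝ) (hτpos : 0 < τ)
    (hτ : ∀ v, τ < (opNorm (A v) ^ 2)⁻¹)
    (X0 : V → Fin n → ℝ) :
    ∃ Xstar : V → Fin n → ℝ,
      Gamma (Pmat E d) A y q α (fun _ => τ) Xstar = Xstar ∧
      Filter.Tendsto
        (fun t => frobNorm ((Gamma (Pmat E d) A y q α (fun _ => τ))^[t] X0 - Xstar))
        Filter.atTop (nhds 0) :=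
  dista_convergence_general E hself hsymm hreg A y q α hq0 hq1 hα τ hτpos hτ X0
end

section
/- (Opial's theorem in finite dimension.) Let T : ℝ^N → ℝ^N be an operator satisfying: (1) T is asymptotically regular, i.e., for every x ∈ ℝ^N, ‖T^{t+1}x − T^t x‖₂ → 0 as t → ∞; (2) T is nonexpansive, i.e., ‖Tx − Tz‖₂ ≤ ‖x − z‖₂ for all x, z ∈ ℝ^N; (3) the set Fix(T) = {x : Tx = x} is nonempty. Then for every x ∈ ℝ^N the sequence {T^t x}_{t∈ℕ} converges to a fixed point of T. -/
open Filter

/-- Opial's theorem in finite dimension. If `T : ℝ^N → ℝ^N` is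
asymptotically regular, nonexpansive, and has at least one fixed point, then for every
`x` the sequence of iterates `T^t x` converges to a fixed point of `T`. -/
theorem opial_theorem {N : ℕ}
    (T : EuclideanSpace ℝ (Fin N) → EuclideanSpace ℝ (Fin N))
    (hasymp : ∀ x : EuclideanSpace ℝ (Fin N),
      Filter.Tendsto (fun t : ℕ => ‖T^[t + 1] x - T^[t] x‖) Filter.atTop (nhds 0))
    (hnonexp : ∀ x z : EuclideanSpace ℝ (Fin N), ‖T x - T z‖ ≤ ‖x - z‖)
    (hfix : ∃ x : EuclideanSpace ℝ (Fin N), T x = x) :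
    ∀ x : EuclideanSpace ℝ (Fin N), ∃ p : EuclideanSpace ℝ (Fin N),
      T p = p ∧ Filter.Tendsto (fun t : ℕ => T^[t] x) Filter.atTop (nhds p) := by
  intro x
  obtain ⟨q, hq⟩ := hfix
  -- distance to any fixed point is nonincreasing
  have anti : ∀ p : EuclideanSpace ℝ (Fin N), T p = p →
      Antitone (fun t : ℕ => ‖T^[t] x - p‖) := by
    intro p hp
    apply antitone_nat_of_succ_le
    intro t
    calc ‖T^[t+1] x - p‖ = ‖T (T^[t] x) - T p‖ := by
          rw [Function.iterate_succ_apply', hp]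
      _ ≤ ‖T^[t] x - p‖ := hnonexp _ _
  -- iterates are bounded
  have hbdd : ∀ t : ℕ, T^[t] x ∈ Metric.closedBall q ‖x - q‖ := by
    intro t
    have := anti q hq (Nat.zero_le t)
    simpa [Metric.mem_closedBall, dist_eq_norm] using this
  obtain ⟨p, -, φ, hφ, hlim⟩ :=
    tendsto_subseq_of_bounded Metric.isBounded_closedBall hbdd
  have hlimnorm : Tendsto (fun k : ℕ => ‖T^[φ k] x - p‖) atTop (nhds 0) := by
    exact tendsto_iff_norm_sub_tendsto_zero.mp hlim
  -- p is a fixed point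
  have hfp : T p = p := by
    have hbound : ∀ k : ℕ, ‖T p - p‖ ≤
        ‖p - T^[φ k] x‖ + ‖T^[φ k + 1] x - T^[φ k] x‖ + ‖T^[φ k] x - p‖ := by
      intro k
      have h1 : ‖T p - T^[φ k + 1] x‖ ≤ ‖p - T^[φ k] x‖ := by
        rw [Function.iterate_succ_apply']
        exact hnonexp _ _
      calc ‖T p - p‖
          ≤ ‖T p - T^[φ k + 1] x‖ + ‖T^[φ k + 1] x - T^[φ k] x‖ + ‖T^[φ k] x - p‖ := by
            have := norm_add₃_le (a := T p - T^[φ k + 1] x)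
              (b := T^[φ k + 1] x - T^[φ k] x) (c := T^[φ k] x - p)
            simpa using this
        _ ≤ ‖p - T^[φ k] x‖ + ‖T^[φ k + 1] x - T^[φ k] x‖ + ‖T^[φ k] x - p‖ := by
            gcongr
    have hto0 : Tendsto (fun k : ℕ =>
        ‖p - T^[φ k] x‖ + ‖T^[φ k + 1] x - T^[φ k] x‖ + ‖T^[φ k] x - p‖)
        atTop (nhds 0) := by
      have t1 : Tendsto (fun k : ℕ => ‖p - T^[φ k] x‖) atTop (nhds 0) := by
        simpa [norm_sub_rev] using hlimnorm
      have t2 : Tendsto (fun k : ℕ => ‖T^[φ k + 1] x - T^[φ k] x‖) atTop (nhds 0) :=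
        (hasymp x).comp hφ.tendsto_atTop
      simpa using (t1.add t2).add hlimnorm
    have h := ge_of_tendsto' hto0 hbound
    have hz : ‖T p - p‖ = 0 := le_antisymm h (norm_nonneg _)
    exact norm_sub_eq_zero_iff.mp hz
  refine ⟨p, hfp, ?_⟩
  -- full convergence via monotonicity
  rw [tendsto_iff_norm_sub_tendsto_zero]
  have hantip := anti p hfp
  rw [Metric.tendsto_atTop] at hlimnorm ⊢
  intro ε hε
  obtain ⟨K, hK⟩ := hlimnorm ε hε
  refine ⟨φ K, fun t ht => ?_⟩
  have h1 : ‖T^[t] x - p‖ ≤ ‖T^[φ K] x - p‖ := hantip ht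
  have h2 := hK K le_rfl
  rw [Real.dist_eq, sub_zero, abs_of_nonneg (norm_nonneg _)] at h2 ⊢
  linarith
end

section
/- Fix v ∈ V, fix C, B ∈ ℝ^{n×|V|} and fix all columns of X except column v. Then the function x_v ↦ F^S(X,C,B) attains its minimum over ℝ^n at the unique point η_α[(1−q) c̄_v + q b_v + q τ_v A_vᵀ(y_v − A_v b_v)], where c̄_v = (1/d) Σ_{w∈N_v} c_w. -/
open Finset Filter Matrix

section Aux

lemma scalar_soft (α u s : ℝ) (hα : 0 < α) :
    ((if α < |u| then Real.sign u * (|u| - α) else 0) - u) ^ 2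
      + 2 * α * |if α < |u| then Real.sign u * (|u| - α) else 0|
      + (s - (if α < |u| then Real.sign u * (|u| - α) else 0)) ^ 2
    ≤ (s - u) ^ 2 + 2 * α * |s| := by
  by_cases h : α < |u|
  · simp only [if_pos h]
    rcases lt_trichotomy u 0 with hu | hu | hu
    · have habs : |u| = -u := abs_of_neg hu
      have hs : Real.sign u = -1 := Real.sign_of_neg hu
      rw [habs, hs]
      have hpneg : -1 * (-u - α) < 0 := by rw [habs] at h; nlinarith
      rw [abs_of_neg hpneg]
      nlinarith [neg_abs_le s]
    · exfalso; rw [hu, abs_zero] at h; linarith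
    · have habs : |u| = u := abs_of_pos hu
      have hs : Real.sign u = 1 := Real.sign_of_pos hu
      rw [habs, hs]
      have hppos : 0 < 1 * (u - α) := by rw [habs] at h; nlinarith
      rw [abs_of_pos hppos]
      nlinarith [le_abs_self s]
  · simp only [if_neg h, abs_zero]
    push_neg at h
    nlinarith [le_abs_self (s * u), abs_mul s u, abs_nonneg s,
      mul_le_mul_of_nonneg_left h (abs_nonneg s)]

lemma l1_quad_min {k : ℕ} (α : ℝ) (hα : 0 < α) (u ξ : Fin k → ℝ) :
    (∑ i, (eta α u i - u i) ^ 2) + 2 * α * onenorm (eta α u)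
      + ∑ i, (ξ i - eta α u i) ^ 2
    ≤ (∑ i, (ξ i - u i) ^ 2) + 2 * α * onenorm ξ := by
  simp only [onenorm, Finset.mul_sum, ← Finset.sum_add_distrib]
  exact Finset.sum_le_sum fun i _ => by
    simpa [eta] using scalar_soft α (u i) (ξ i) hα

lemma sum_sub_sq {k : ℕ} (a b : Fin k → ℝ) :
    ∑ j, (a j - b j) ^ 2 = (∑ j, (a j) ^ 2) - 2 * (∑ j, a j * b j) + ∑ j, (b j) ^ 2 := by
  rw [Finset.mul_sum, ← Finset.sum_sub_distrib, ← Finset.sum_add_distrib]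
  exact Finset.sum_congr rfl fun j _ => by ring

lemma sum_sub_sq' {k : ℕ} (a b : Fin k → ℝ) :
    ∑ j, ((a - b) j) ^ 2 = (∑ j, (a j) ^ 2) - 2 * (∑ j, a j * b j) + ∑ j, (b j) ^ 2 := by
  simp only [Pi.sub_apply]; exact sum_sub_sq a b

lemma swap_dot {m n : ℕ} (A : Matrix (Fin m) (Fin n) ℝ) (ξ : Fin n → ℝ) (z : Fin m → ℝ) :
    ∑ j, A.mulVec ξ j * z j = ∑ i, ξ i * (Aᵀ.mulVec z) i := by
  simp only [Matrix.mulVec, dotProduct, Matrix.transpose_apply, Finset.sum_mul,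
    Finset.mul_sum]
  rw [Finset.sum_comm]
  exact Finset.sum_congr rfl fun i _ => Finset.sum_congr rfl fun j _ => by ring

lemma term_eq {n m : ℕ} {V' : Type*} (N : Finset V') (d : ℕ) (hd : (d:ℝ) ≠ 0)
    (hcard : N.card = d)
    (Av : Matrix (Fin m) (Fin n) ℝ) (yv : Fin m → ℝ) (bv : Fin n → ℝ)
    (C : V' → Fin n → ℝ) (q α τv : ℝ) (hτ : τv ≠ 0) (ξ u0 : Fin n → ℝ)
    (hu0 : u0 = fun i => (1 - q) * ((1 / (d : ℝ)) * ∑ w ∈ N, C w i) + q * bv i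
        + q * τv * (Avᵀ.mulVec (yv - Av.mulVec bv) i)) :
    q * enorm2 (Av.mulVec ξ - yv) ^ 2 + (2 * α / τv) * onenorm ξ
      + ((1 - q) / ((d : ℝ) * τv)) * ∑ w ∈ N, enorm2 (ξ - C w) ^ 2
      + (q / τv) * enorm2 (ξ - bv) ^ 2
      - q * enorm2 (Av.mulVec (ξ - bv)) ^ 2
    = (1 / τv) * ((∑ i, (ξ i - u0 i) ^ 2) + 2 * α * onenorm ξ)
      + (q * ((∑ j, (yv j) ^ 2) - ∑ j, (Av.mulVec bv j) ^ 2)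
        + ((1 - q) / ((d : ℝ) * τv)) * ∑ w ∈ N, ∑ i, (C w i) ^ 2
        + (q / τv) * ∑ i, (bv i) ^ 2 - (1 / τv) * ∑ i, (u0 i) ^ 2) := by
  have hsq : ∀ (k : ℕ) (x : Fin k → ℝ), enorm2 x ^ 2 = ∑ i, (x i) ^ 2 := fun k x =>
    Real.sq_sqrt (Finset.sum_nonneg fun i _ => sq_nonneg _)
  rw [Matrix.mulVec_sub]
  simp only [hsq, sum_sub_sq']
  have e3 : ∑ w ∈ N, ((∑ i, (ξ i) ^ 2) - 2 * (∑ i, ξ i * C w i) + ∑ i, (C w i) ^ 2)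
      = (d : ℝ) * (∑ i, (ξ i) ^ 2) - 2 * (∑ i, ξ i * ∑ w ∈ N, C w i)
        + ∑ w ∈ N, ∑ i, (C w i) ^ 2 := by
    rw [Finset.sum_add_distrib, Finset.sum_sub_distrib, Finset.sum_const, hcard,
      nsmul_eq_mul, ← Finset.mul_sum, Finset.sum_comm]
    simp only [Finset.mul_sum]
  rw [e3]
  have e5 : (∑ j, Av.mulVec ξ j * yv j)
      = (∑ i, ξ i * (Avᵀ.mulVec (yv - Av.mulVec bv)) i)
        + ∑ j, Av.mulVec ξ j * Av.mulVec bv j := by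
    rw [← swap_dot, ← Finset.sum_add_distrib]
    exact Finset.sum_congr rfl fun j _ => by simp only [Pi.sub_apply]; ring
  rw [e5, sum_sub_sq ξ u0]
  have e4 : (∑ i, ξ i * u0 i)
      = (1 - q) * (1 / (d : ℝ)) * (∑ i, ξ i * ∑ w ∈ N, C w i)
        + q * (∑ i, ξ i * bv i)
        + q * τv * (∑ i, ξ i * (Avᵀ.mulVec (yv - Av.mulVec bv)) i) := by
    have h : ∀ i, ξ i * u0 i
        = (1 - q) * (1 / (d : ℝ)) * (ξ i * ∑ w ∈ N, C w i) + q * (ξ i * bv i)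
          + q * τv * (ξ i * (Avᵀ.mulVec (yv - Av.mulVec bv)) i) := fun i => by
      rw [hu0]; ring
    simp only [h, Finset.sum_add_distrib, ← Finset.mul_sum]
  rw [e4]
  field_simp
  ring

lemma g_min {n m : ℕ} {V' : Type*} (N : Finset V') (d : ℕ) (hd : (d:ℝ) ≠ 0)
    (hcard : N.card = d)
    (Av : Matrix (Fin m) (Fin n) ℝ) (yv : Fin m → ℝ) (bv : Fin n → ℝ)
    (C : V' → Fin n → ℝ) (q α τv : ℝ) (hα : 0 < α) (hτ : 0 < τv) (u0 ξ : Fin n → ℝ)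
    (hu0 : u0 = fun i => (1 - q) * ((1 / (d : ℝ)) * ∑ w ∈ N, C w i) + q * bv i
        + q * τv * (Avᵀ.mulVec (yv - Av.mulVec bv) i)) :
    (q * enorm2 (Av.mulVec (eta α u0) - yv) ^ 2 + (2 * α / τv) * onenorm (eta α u0)
      + ((1 - q) / ((d : ℝ) * τv)) * ∑ w ∈ N, enorm2 (eta α u0 - C w) ^ 2
      + (q / τv) * enorm2 (eta α u0 - bv) ^ 2
      - q * enorm2 (Av.mulVec (eta α u0 - bv)) ^ 2)
      + (1 / τv) * ∑ i, (ξ i - eta α u0 i) ^ 2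
    ≤ q * enorm2 (Av.mulVec ξ - yv) ^ 2 + (2 * α / τv) * onenorm ξ
      + ((1 - q) / ((d : ℝ) * τv)) * ∑ w ∈ N, enorm2 (ξ - C w) ^ 2
      + (q / τv) * enorm2 (ξ - bv) ^ 2
      - q * enorm2 (Av.mulVec (ξ - bv)) ^ 2 := by
  rw [term_eq N d hd hcard Av yv bv C q α τv hτ.ne' ξ u0 hu0,
    term_eq N d hd hcard Av yv bv C q α τv hτ.ne' (eta α u0) u0 hu0]
  have hnn : (0 : ℝ) ≤ 1 / τv := by positivity
  have h3 : (1 / τv) * (((∑ i, (eta α u0 i - u0 i) ^ 2) + 2 * α * onenorm (eta α u0))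
        + ∑ i, (ξ i - eta α u0 i) ^ 2)
      ≤ (1 / τv) * ((∑ i, (ξ i - u0 i) ^ 2) + 2 * α * onenorm ξ) :=
    mul_le_mul_of_nonneg_left (l1_quad_min α hα u0 ξ) hnn
  rw [mul_add] at h3
  linarith

end Aux

/-- Proposition 5. For fixed `C`, `B` and all columns of `X` other than `v`,
the map `x_v ↦ F^S(X,C,B)` attains its minimum at the unique point
`η_α[(1−q) c̄_v + q b_v + q τ_v A_vᵀ(y_v − A_v b_v)]`, where `c̄_v = (1/d) ∑_{w∈N_v} c_w`. -/
theorem surrogate_min_in_x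
    {n m d : ℕ} {V : Type*} [Fintype V] [DecidableEq V] [Nonempty V]
    (E : V → V → Prop) [DecidableRel E]
    (hself : ∀ v, E v v) (hsymm : ∀ u v, E u v → E v u)
    (hreg : ∀ v, (Finset.univ.filter (fun w => E v w)).card = d)
    (A : V → Matrix (Fin m) (Fin n) ℝ) (y : V → Fin m → ℝ)
    (q α : ℝ) (hq0 : 0 < q) (hq1 : q < 1) (hα : 0 < α)
    (τ : V → ℝ) (hτpos : ∀ v, 0 < τ v)
    (v : V) (X C B : V → Fin n → ℝ) :
    let p : Fin n → ℝ := eta α (fun i =>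
      (1 - q) * ((1 / (d : ℝ)) * ∑ w ∈ Finset.univ.filter (fun w => E v w), C w i)
        + q * B v i + q * τ v * ((A v)ᵀ.mulVec (y v - (A v).mulVec (B v)) i))
    (∀ ξ : Fin n → ℝ,
        FS E d A y q α τ (Function.update X v p) C B
          ≤ FS E d A y q α τ (Function.update X v ξ) C B)
      ∧ (∀ ξ : Fin n → ℝ, ξ ≠ p →
        FS E d A y q α τ (Function.update X v p) C B
          < FS E d A y q α τ (Function.update X v ξ) C B) := by
  intro p
  have hτ : 0 < τ v := hτpos v
  have hdpos : 0 < d := by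
    have hv : v ∈ Finset.univ.filter (fun w => E v w) := by
      simp [hself v]
    have hcard := hreg v
    have := Finset.card_pos.mpr ⟨v, hv⟩
    omega
  have hd' : (d : ℝ) ≠ 0 := Nat.cast_ne_zero.mpr hdpos.ne'
  set u0 : Fin n → ℝ := fun i =>
      (1 - q) * ((1 / (d : ℝ)) * ∑ w ∈ Finset.univ.filter (fun w => E v w), C w i)
        + q * B v i + q * τ v * ((A v)ᵀ.mulVec (y v - (A v).mulVec (B v)) i) with hu0
  have hp : p = eta α u0 := rfl
  have hFS : ∀ ξ : Fin n → ℝ,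
      FS E d A y q α τ (Function.update X v ξ) C B
        = (q * enorm2 ((A v).mulVec ξ - y v) ^ 2 + (2 * α / τ v) * onenorm ξ
            + ((1 - q) / ((d : ℝ) * τ v)) *
                ∑ w ∈ Finset.univ.filter (fun w => E v w), enorm2 (ξ - C w) ^ 2
            + (q / τ v) * enorm2 (ξ - B v) ^ 2
            - q * enorm2 ((A v).mulVec (ξ - B v)) ^ 2)
          + ∑ u ∈ Finset.univ.erase v,
              (q * enorm2 ((A u).mulVec (X u) - y u) ^ 2 + (2 * α / τ u) * onenorm (X u)
                + ((1 - q) / ((d : ℝ) * τ u)) *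
                    ∑ w ∈ Finset.univ.filter (fun w => E u w), enorm2 (X u - C w) ^ 2
                + (q / τ u) * enorm2 (X u - B u) ^ 2
                - q * enorm2 ((A u).mulVec (X u - B u)) ^ 2) := by
    intro ξ
    unfold FS
    rw [← Finset.add_sum_erase _ _ (Finset.mem_univ v)]
    congr 1
    · simp only [Function.update_self]
    · exact Finset.sum_congr rfl fun u hu => by
        rw [Function.update_of_ne (Finset.ne_of_mem_erase hu)]
  have key : ∀ ξ : Fin n → ℝ,
      FS E d A y q α τ (Function.update X v p) C B + (1 / τ v) * ∑ i, (ξ i - p i) ^ 2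
        ≤ FS E d A y q α τ (Function.update X v ξ) C B := by
    intro ξ
    rw [hFS ξ, hFS p, hp]
    have h := g_min (Finset.univ.filter (fun w => E v w)) d hd' (hreg v)
      (A v) (y v) (B v) C q α (τ v) hα hτ u0 ξ hu0
    linarith
  constructor
  · intro ξ
    have h := key ξ
    have hslack : 0 ≤ (1 / τ v) * ∑ i, (ξ i - p i) ^ 2 := by positivity
    linarith
  · intro ξ hne
    have h := key ξ
    have hpos : 0 < ∑ i, (ξ i - p i) ^ 2 := by
      obtain ⟨i, hi⟩ := Function.ne_iff.mp hne
      refine Finset.sum_pos' (fun j _ => sq_nonneg _) ⟨i, Finset.mem_univ i, ?_⟩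
      have hne0 : ξ i - p i ≠ 0 := sub_ne_zero.mpr hi
      exact (sq_nonneg _).lt_of_ne' (pow_ne_zero 2 hne0)
    have hslack : 0 < (1 / τ v) * ∑ i, (ξ i - p i) ^ 2 :=
      mul_pos (one_div_pos.mpr hτ) hpos
    linarith
end

section
/- Assume the stepsizes are uniform, τ_v = τ for all v ∈ V, with τ < ‖A_v‖₂⁻² for every v ∈ V. Then F(ΓX) ≤ F(X) for every X ∈ ℝ^{n×|V|}; consequently, for any initial condition X(0), the sequence {F(X(t))}_{t∈ℕ} generated by X(t+1) = ΓX(t) is non-increasing, bounded below by 0, and admits a limit. -/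
open Finset Filter Matrix

/-! ### Auxiliary machinery -/

noncomputable def dp {k : ℕ} (x y : Fin k → ℝ) : ℝ := ∑ i, x i * y i

noncomputable def esq {k : ℕ} (x : Fin k → ℝ) : ℝ := ∑ i, (x i) ^ 2

lemma esq_nonneg {k : ℕ} (x : Fin k → ℝ) : 0 ≤ esq x :=
  Finset.sum_nonneg fun _ _ => sq_nonneg _

lemma enorm2_sq {k : ℕ} (x : Fin k → ℝ) : enorm2 x ^ 2 = esq x :=
  Real.sq_sqrt (esq_nonneg x)

lemma enorm2_eq {k : ℕ} (x : Fin k → ℝ) : enorm2 x = Real.sqrt (esq x) := rfl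

lemma enorm2_nonneg {k : ℕ} (x : Fin k → ℝ) : 0 ≤ enorm2 x := Real.sqrt_nonneg _

lemma esq_zero {k : ℕ} : esq (0 : Fin k → ℝ) = 0 := by simp [esq]

lemma esq_sub {k : ℕ} (x y : Fin k → ℝ) :
    esq (x - y) = esq x - 2 * dp x y + esq y := by
  simp only [esq, dp, Pi.sub_apply, ← Finset.sum_add_distrib, ← Finset.sum_sub_distrib,
    Finset.mul_sum]
  exact Finset.sum_congr rfl fun i _ => by ring

lemma esq_comm_sub {k : ℕ} (x y : Fin k → ℝ) : esq (x - y) = esq (y - x) := by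
  simp only [esq, Pi.sub_apply]
  exact Finset.sum_congr rfl fun i _ => by ring

lemma dp_mulVec_left {m n : ℕ} (A : Matrix (Fin m) (Fin n) ℝ) (x : Fin n → ℝ) (z : Fin m → ℝ) :
    dp (A.mulVec x) z = dp x (Aᵀ.mulVec z) := by
  simp only [dp, Matrix.mulVec, dotProduct, Matrix.transpose_apply,
    Finset.sum_mul, Finset.mul_sum]
  rw [Finset.sum_comm]
  exact Finset.sum_congr rfl fun i _ => Finset.sum_congr rfl fun j _ => by ring

lemma dp_sub_right {k : ℕ} (x a b : Fin k → ℝ) : dp x (a - b) = dp x a - dp x b := by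
  simp only [dp, Pi.sub_apply, ← Finset.sum_sub_distrib]
  exact Finset.sum_congr rfl fun i _ => by ring

lemma enorm2_pos {k : ℕ} {x : Fin k → ℝ} (hx : x ≠ 0) : 0 < enorm2 x := by
  rw [enorm2_eq]
  apply Real.sqrt_pos.mpr
  obtain ⟨i, hi⟩ := Function.ne_iff.mp hx
  have : (0:ℝ) < (x i)^2 := by rw [← sq_abs]; exact pow_pos (abs_pos.mpr hi) 2
  exact lt_of_lt_of_le this (Finset.single_le_sum (fun j _ => sq_nonneg (x j)) (Finset.mem_univ i))

lemma esq_mulVec_le_frob {m n : ℕ} (A : Matrix (Fin m) (Fin n) ℝ) (z : Fin n → ℝ) :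
    esq (A.mulVec z) ≤ (∑ i, ∑ j, (A i j)^2) * esq z := by
  have h : ∀ i, (A.mulVec z i)^2 ≤ (∑ j, (A i j)^2) * esq z := fun i =>
    Finset.sum_mul_sq_le_sq_mul_sq Finset.univ (fun j => A i j) z
  calc esq (A.mulVec z) = ∑ i, (A.mulVec z i)^2 := rfl
    _ ≤ ∑ i, (∑ j, (A i j)^2) * esq z := Finset.sum_le_sum (fun i _ => h i)
    _ = (∑ i, ∑ j, (A i j)^2) * esq z := (Finset.sum_mul _ _ _).symm

lemma opNorm_nonneg {m n : ℕ} (A : Matrix (Fin m) (Fin n) ℝ) : 0 ≤ opNorm A := by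
  apply Real.sSup_nonneg
  rintro c ⟨z, hz, rfl⟩
  exact div_nonneg (enorm2_nonneg _) (enorm2_nonneg _)

lemma enorm2_mulVec_le {m n : ℕ} (A : Matrix (Fin m) (Fin n) ℝ) (z : Fin n → ℝ) :
    enorm2 (A.mulVec z) ≤ opNorm A * enorm2 z := by
  by_cases hz : z = 0
  · subst hz
    rw [Matrix.mulVec_zero]
    have h1 : enorm2 (0 : Fin m → ℝ) = 0 := by simp [enorm2]
    have h2 : enorm2 (0 : Fin n → ℝ) = 0 := by simp [enorm2]
    rw [h1, h2, mul_zero]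
  · have hzpos := enorm2_pos hz
    have hmem : enorm2 (A.mulVec z) / enorm2 z ∈
        {c : ℝ | ∃ z : Fin n → ℝ, z ≠ 0 ∧ c = enorm2 (A.mulVec z) / enorm2 z} :=
      ⟨z, hz, rfl⟩
    have hbdd : BddAbove {c : ℝ | ∃ z : Fin n → ℝ, z ≠ 0 ∧ c = enorm2 (A.mulVec z) / enorm2 z} := by
      refine ⟨Real.sqrt (∑ i, ∑ j, (A i j)^2), ?_⟩
      rintro c ⟨w, hw, rfl⟩
      rw [div_le_iff₀ (enorm2_pos hw)]
      rw [enorm2_eq, enorm2_eq, ← Real.sqrt_mul (by positivity)]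
      exact Real.sqrt_le_sqrt (esq_mulVec_le_frob A w)
    have := le_csSup hbdd hmem
    rw [div_le_iff₀ hzpos] at this
    exact this

lemma esq_mulVec_le {m n : ℕ} (A : Matrix (Fin m) (Fin n) ℝ) (z : Fin n → ℝ) :
    esq (A.mulVec z) ≤ opNorm A ^ 2 * esq z := by
  have h2 : enorm2 (A.mulVec z) ^ 2 ≤ (opNorm A * enorm2 z)^2 :=
    pow_le_pow_left₀ (enorm2_nonneg _) (enorm2_mulVec_le A z) 2
  calc esq (A.mulVec z) = enorm2 (A.mulVec z) ^ 2 := (enorm2_sq _).symm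
    _ ≤ (opNorm A * enorm2 z)^2 := h2
    _ = opNorm A ^ 2 * enorm2 z ^ 2 := by ring
    _ = opNorm A ^ 2 * esq z := by rw [enorm2_sq]

lemma tau_esq_le {m n : ℕ} (A : Matrix (Fin m) (Fin n) ℝ) {τ : ℝ} (hτpos : 0 < τ)
    (hτ : τ < (opNorm A ^ 2)⁻¹) (z : Fin n → ℝ) :
    τ * esq (A.mulVec z) ≤ esq z := by
  have hN := opNorm_nonneg A
  by_cases hN0 : opNorm A = 0
  · rw [hN0] at hτ; norm_num at hτ; linarith
  · have hNpos : 0 < opNorm A := lt_of_le_of_ne hN (Ne.symm hN0)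
    have hN2 : 0 < opNorm A ^ 2 := by positivity
    have h1 : τ * opNorm A ^ 2 < 1 := by
      have := mul_lt_mul_of_pos_right hτ hN2
      rwa [inv_mul_cancel₀ (ne_of_gt hN2)] at this
    calc τ * esq (A.mulVec z) ≤ τ * (opNorm A ^ 2 * esq z) :=
          mul_le_mul_of_nonneg_left (esq_mulVec_le A z) (le_of_lt hτpos)
      _ = (τ * opNorm A ^ 2) * esq z := by ring
      _ ≤ 1 * esq z := mul_le_mul_of_nonneg_right (le_of_lt h1) (esq_nonneg z)
      _ = esq z := one_mul _

lemma soft_scalar (α u s : ℝ) (hα : 0 ≤ α) :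
    ((if α < |u| then Real.sign u * (|u| - α) else 0) - u)^2
      + 2*α*|if α < |u| then Real.sign u * (|u| - α) else 0|
    ≤ (s - u)^2 + 2*α*|s| := by
  by_cases h : α < |u|
  · rcases lt_trichotomy u 0 with hu | hu | hu
    · rw [if_pos h, Real.sign_of_neg hu]
      rw [abs_of_neg hu] at h ⊢
      have ht : (-1 : ℝ) * (-u - α) = u + α := by ring
      rw [ht, abs_of_neg (by linarith : u + α < 0)]
      nlinarith [sq_nonneg (s - u - α), neg_abs_le s]
    · exfalso; rw [hu, abs_zero] at h; linarith
    · rw [if_pos h, Real.sign_of_pos hu]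
      rw [abs_of_pos hu] at h ⊢
      have ht : (1 : ℝ) * (u - α) = u - α := by ring
      rw [ht, abs_of_nonneg (by linarith : (0:ℝ) ≤ u - α)]
      nlinarith [sq_nonneg (s - u + α), le_abs_self s]
  · rw [if_neg h, abs_zero]
    push_neg at h
    nlinarith [sq_abs s, abs_nonneg s, le_abs_self (s*u), abs_mul s u,
      mul_le_mul_of_nonneg_left h (abs_nonneg s)]

lemma eta_min {k : ℕ} {α : ℝ} (hα : 0 ≤ α) (U x : Fin k → ℝ) :
    esq (eta α U - U) + 2*α*onenorm (eta α U) ≤ esq (x - U) + 2*α*onenorm x := by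
  simp only [esq, onenorm, eta, Pi.sub_apply, Finset.mul_sum, ← Finset.sum_add_distrib]
  exact Finset.sum_le_sum fun i _ => soft_scalar α (U i) (x i) hα

lemma variance_min {ι : Type*} (s : Finset ι) (d : ℕ) (hcard : s.card = d)
    (a : ι → ℝ) (m c : ℝ) (hm : ∑ v ∈ s, a v = (d : ℝ) * m) :
    ∑ v ∈ s, (a v - m)^2 ≤ ∑ v ∈ s, (a v - c)^2 := by
  have key : ∑ v ∈ s, (a v - c)^2
      = ∑ v ∈ s, (a v - m)^2 + ((d:ℝ)*(m-c)^2) := by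
    have h1 : ∀ v ∈ s, (a v - c)^2 = (a v - m)^2 + (2*(m-c)*a v + (c^2 - m^2)) :=
      fun v _ => by ring
    rw [Finset.sum_congr rfl h1, Finset.sum_add_distrib, Finset.sum_add_distrib,
      ← Finset.mul_sum, hm, Finset.sum_const, hcard, nsmul_eq_mul]
    ring
  rw [key]
  nlinarith [sq_nonneg (m - c), Nat.cast_nonneg (α := ℝ) d]

lemma pmat_sum {V : Type*} [Fintype V] (E : V → V → Prop) [DecidableRel E] (d : ℕ)
    (v : V) (f : V → ℝ) :
    ∑ w, Pmat E d v w * f w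
      = (1/(d:ℝ)) * ∑ w ∈ Finset.univ.filter (fun w => E v w), f w := by
  rw [Finset.mul_sum, Finset.sum_filter]
  exact Finset.sum_congr rfl fun w _ => by
    by_cases h : E v w <;> simp [Pmat, h]

lemma avg_pmat {n : ℕ} {V : Type*} [Fintype V] (E : V → V → Prop) [DecidableRel E] (d : ℕ)
    (Z : V → Fin n → ℝ) (v : V) (i : Fin n) :
    avg (Pmat E d) Z v i = (1/(d:ℝ)) * ∑ w ∈ Finset.univ.filter (fun w => E v w), Z w i :=
  pmat_sum E d v (fun w => Z w i)

lemma filter_swap {V : Type*} [Fintype V] (E : V → V → Prop) [DecidableRel E]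
    (hsymm : ∀ u v, E u v → E v u) (f : V → V → ℝ) :
    ∑ v, ∑ w ∈ Finset.univ.filter (fun w => E v w), f v w
      = ∑ w, ∑ v ∈ Finset.univ.filter (fun v => E w v), f v w := by
  simp only [Finset.sum_filter]
  rw [Finset.sum_comm]
  exact Finset.sum_congr rfl fun w _ => Finset.sum_congr rfl fun v _ => by
    by_cases h : E v w
    · rw [if_pos h, if_pos (hsymm v w h)]
    · rw [if_neg h, if_neg fun h' => h (hsymm w v h')]

lemma gcol_eq {n m : ℕ} {V : Type*} [Fintype V]
    (A : Matrix (Fin m) (Fin n) ℝ) (y : Fin m → ℝ)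
    (q α τ : ℝ) (hτ : τ ≠ 0) (d : ℕ) (hd : (d:ℝ) ≠ 0) (S : Finset V) (hcard : S.card = d)
    (C : V → Fin n → ℝ) (B : Fin n → ℝ) (x : Fin n → ℝ) :
    q * esq (A.mulVec x - y) + (2 * α / τ) * onenorm x
      + ((1-q)/((d:ℝ)*τ)) * ∑ w ∈ S, esq (x - C w)
      + (q/τ) * esq (x - B) - q * esq (A.mulVec (x - B))
    = (1/τ) * esq (x - (fun i => (1-q) * ((1/(d:ℝ)) * ∑ w ∈ S, C w i)
          + q * (B i + τ * (Aᵀ.mulVec (y - A.mulVec B) i))))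
      + (2 * α / τ) * onenorm x
      + (q * esq y + ((1-q)/((d:ℝ)*τ)) * ∑ w ∈ S, esq (C w)
         + (q/τ) * esq B - q * esq (A.mulVec B)
         - (1/τ) * esq (fun i => (1-q) * ((1/(d:ℝ)) * ∑ w ∈ S, C w i)
             + q * (B i + τ * (Aᵀ.mulVec (y - A.mulVec B) i)))) := by
  set U : Fin n → ℝ := fun i => (1-q) * ((1/(d:ℝ)) * ∑ w ∈ S, C w i)
      + q * (B i + τ * (Aᵀ.mulVec (y - A.mulVec B) i)) with hUdef
  have hswap : ∑ i, x i * ∑ w ∈ S, C w i = ∑ w ∈ S, dp x (C w) := by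
    simp only [dp, Finset.mul_sum]
    exact Finset.sum_comm
  have hU : dp x U = (1-q) * ((1/(d:ℝ)) * ∑ w ∈ S, dp x (C w)) + q * dp x B
      + q * τ * (dp x (Aᵀ.mulVec y) - dp x (Aᵀ.mulVec (A.mulVec B))) := by
    have expand : ∀ i, x i * U i = (1-q) * (1/(d:ℝ)) * (x i * ∑ w ∈ S, C w i)
        + q * (x i * B i) + q * τ * (x i * (Aᵀ.mulVec (y - A.mulVec B) i)) := by
      intro i; rw [hUdef]; ring
    have h0 : dp x U = ∑ i, ((1-q) * (1/(d:ℝ)) * (x i * ∑ w ∈ S, C w i)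
        + q * (x i * B i) + q * τ * (x i * (Aᵀ.mulVec (y - A.mulVec B) i))) :=
      Finset.sum_congr rfl fun i _ => expand i
    rw [h0]
    simp only [Finset.sum_add_distrib, ← Finset.mul_sum]
    have h1 : dp x (Aᵀ.mulVec (y - A.mulVec B))
        = dp x (Aᵀ.mulVec y) - dp x (Aᵀ.mulVec (A.mulVec B)) := by
      rw [Matrix.mulVec_sub, dp_sub_right]
    rw [show ∑ i, x i * (Aᵀ.mulVec (y - A.mulVec B)) i = dp x (Aᵀ.mulVec (y - A.mulVec B)) from rfl,
      show (∑ i, x i * B i) = dp x B from rfl, hswap, h1]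
    ring
  have hsumS : ∑ w ∈ S, esq (x - C w)
      = (d:ℝ) * esq x - 2 * ∑ w ∈ S, dp x (C w) + ∑ w ∈ S, esq (C w) := by
    have h2 : ∀ w ∈ S, esq (x - C w) = esq x - 2 * dp x (C w) + esq (C w) :=
      fun w _ => esq_sub x (C w)
    rw [Finset.sum_congr rfl h2, Finset.sum_add_distrib, Finset.sum_sub_distrib,
      ← Finset.mul_sum, Finset.sum_const, hcard, nsmul_eq_mul]
  rw [esq_sub (A.mulVec x) y, Matrix.mulVec_sub, esq_sub (A.mulVec x) (A.mulVec B),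
    esq_sub x B, esq_sub x U, hsumS, hU, dp_mulVec_left A x y,
    dp_mulVec_left A x (A.mulVec B)]
  field_simp
  ring

lemma gcol_min {n m : ℕ} {V : Type*} [Fintype V]
    (A : Matrix (Fin m) (Fin n) ℝ) (y : Fin m → ℝ)
    (q α τ : ℝ) (hτpos : 0 < τ) (hα : 0 ≤ α) (d : ℕ) (hd : (d:ℝ) ≠ 0)
    (S : Finset V) (hcard : S.card = d)
    (C : V → Fin n → ℝ) (B : Fin n → ℝ) (t x : Fin n → ℝ)
    (ht : t = eta α (fun i => (1-q) * ((1/(d:ℝ)) * ∑ w ∈ S, C w i)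
          + q * (B i + τ * (Aᵀ.mulVec (y - A.mulVec B) i)))) :
    q * esq (A.mulVec t - y) + (2 * α / τ) * onenorm t
      + ((1-q)/((d:ℝ)*τ)) * ∑ w ∈ S, esq (t - C w)
      + (q/τ) * esq (t - B) - q * esq (A.mulVec (t - B))
    ≤ q * esq (A.mulVec x - y) + (2 * α / τ) * onenorm x
      + ((1-q)/((d:ℝ)*τ)) * ∑ w ∈ S, esq (x - C w)
      + (q/τ) * esq (x - B) - q * esq (A.mulVec (x - B)) := by
  have hτne : τ ≠ 0 := ne_of_gt hτpos
  rw [gcol_eq A y q α τ hτne d hd S hcard C B t,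
      gcol_eq A y q α τ hτne d hd S hcard C B x]
  set U : Fin n → ℝ := fun i => (1-q) * ((1/(d:ℝ)) * ∑ w ∈ S, C w i)
      + q * (B i + τ * (Aᵀ.mulVec (y - A.mulVec B) i)) with hUdef
  have hmin := eta_min hα U x
  rw [← ht] at hmin
  have h1 : (0:ℝ) ≤ 1/τ := le_of_lt (one_div_pos.mpr hτpos)
  have hmul := mul_le_mul_of_nonneg_left hmin h1
  have expand : ∀ z w : ℝ, (1/τ) * (z + 2*α*w) = (1/τ)*z + (2*α/τ)*w := by
    intro z w; field_simp
  rw [expand, expand] at hmul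
  linarith

lemma FS_eq_Flasso {n m : ℕ} {V : Type*} [Fintype V] (E : V → V → Prop) [DecidableRel E]
    (d : ℕ) (hdne : (d:ℝ) ≠ 0)
    (A : V → Matrix (Fin m) (Fin n) ℝ) (y : V → Fin m → ℝ)
    (q α τ : ℝ) (hτne : τ ≠ 0) (X : V → Fin n → ℝ) :
    FS E d A y q α (fun _ => τ) X (avg (Pmat E d) X) X
      = Flasso (Pmat E d) A y q α (fun _ => τ) X := by
  unfold FS Flasso
  apply Finset.sum_congr rfl
  intro v _
  have h1 : enorm2 ((A v).mulVec (X v) - y v) ^ 2 = enorm2 (y v - (A v).mulVec (X v)) ^ 2 := by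
    rw [enorm2_sq, enorm2_sq, esq_comm_sub]
  have h5 : ∑ w, Pmat E d v w * enorm2 (avg (Pmat E d) X w - X v) ^ 2
      = (1/(d:ℝ)) * ∑ w ∈ Finset.univ.filter (fun w => E v w),
          enorm2 (avg (Pmat E d) X w - X v) ^ 2 :=
    pmat_sum E d v _
  have h6 : ∀ w ∈ Finset.univ.filter (fun w => E v w),
      enorm2 (X v - avg (Pmat E d) X w) ^ 2 = enorm2 (avg (Pmat E d) X w - X v) ^ 2 := by
    intro w _
    rw [enorm2_sq, enorm2_sq, esq_comm_sub]
  rw [h1, sub_self, Matrix.mulVec_zero, h5, Finset.sum_congr rfl h6]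
  rw [show enorm2 (0 : Fin n → ℝ) = 0 from by simp [enorm2],
      show enorm2 (0 : Fin m → ℝ) = 0 from by simp [enorm2]]
  field_simp
  ring

/-- Lemma: descent of `F` along DISTA. With uniform stepsizes `τ < ‖A_v‖₂⁻²`
for every `v`, `F(ΓX) ≤ F(X)` for every `X`; consequently, for every initial condition `X0`,
the sequence `t ↦ F(Γ^t X0)` is non-increasing, bounded below by `0`, and admits a limit. -/
theorem lasso_nonincreasing_along_dista
    {n m d : ℕ} {V : Type*} [Fintype V] [DecidableEq V] [Nonempty V]
    (E : V → V → Prop) [DecidableRel E]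
    (hself : ∀ v, E v v) (hsymm : ∀ u v, E u v → E v u)
    (hreg : ∀ v, (Finset.univ.filter (fun w => E v w)).card = d)
    (A : V → Matrix (Fin m) (Fin n) ℝ) (y : V → Fin m → ℝ)
    (q α : ℝ) (hq0 : 0 < q) (hq1 : q < 1) (hα : 0 < α)
    (τ : ℝ) (hτpos : 0 < τ)
    (hτ : ∀ v, τ < (opNorm (A v) ^ 2)⁻¹) :
    (∀ X : V → Fin n → ℝ,
        Flasso (Pmat E d) A y q α (fun _ => τ) (Gamma (Pmat E d) A y q α (fun _ => τ) X)
          ≤ Flasso (Pmat E d) A y q α (fun _ => τ) X)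
      ∧ ∀ X0 : V → Fin n → ℝ,
        Antitone (fun t : ℕ =>
          Flasso (Pmat E d) A y q α (fun _ => τ)
            ((Gamma (Pmat E d) A y q α (fun _ => τ))^[t] X0))
        ∧ (∀ t : ℕ, 0 ≤ Flasso (Pmat E d) A y q α (fun _ => τ)
            ((Gamma (Pmat E d) A y q α (fun _ => τ))^[t] X0))
        ∧ ∃ L : ℝ, Filter.Tendsto (fun t : ℕ =>
            Flasso (Pmat E d) A y q α (fun _ => τ)
              ((Gamma (Pmat E d) A y q α (fun _ => τ))^[t] X0))
            Filter.atTop (nhds L) := by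
  classical
  have hd0 : 0 < d := by
    obtain ⟨v⟩ := ‹Nonempty V›
    rw [← hreg v]
    exact Finset.card_pos.mpr ⟨v, Finset.mem_filter.mpr ⟨Finset.mem_univ v, hself v⟩⟩
  have hdR : (0:ℝ) < (d:ℝ) := by exact_mod_cast hd0
  have hdne : (d:ℝ) ≠ 0 := ne_of_gt hdR
  have hτne : τ ≠ 0 := ne_of_gt hτpos
  have main : ∀ X : V → Fin n → ℝ,
      Flasso (Pmat E d) A y q α (fun _ => τ) (Gamma (Pmat E d) A y q α (fun _ => τ) X)
        ≤ Flasso (Pmat E d) A y q α (fun _ => τ) X := by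
    intro X
    set X' := Gamma (Pmat E d) A y q α (fun _ => τ) X with hX'
    -- step B : the DISTA update minimizes the surrogate columnwise
    have stepB : FS E d A y q α (fun _ => τ) X' (avg (Pmat E d) X) X
        ≤ FS E d A y q α (fun _ => τ) X (avg (Pmat E d) X) X := by
      unfold FS
      apply Finset.sum_le_sum
      intro v _
      have hX'v : X' v = eta α (fun i =>
          (1-q) * ((1/(d:ℝ)) * ∑ w ∈ Finset.univ.filter (fun w => E v w), avg (Pmat E d) X w i)
          + q * (X v i + τ * ((A v)ᵀ.mulVec (y v - (A v).mulVec (X v)) i))) := by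
        have harg : (fun i => (1 - q) * avg (Pmat E d) (avg (Pmat E d) X) v i
            + q * (X v i + τ * ((A v)ᵀ.mulVec (y v - (A v).mulVec (X v)) i)))
            = (fun i =>
          (1-q) * ((1/(d:ℝ)) * ∑ w ∈ Finset.univ.filter (fun w => E v w), avg (Pmat E d) X w i)
          + q * (X v i + τ * ((A v)ᵀ.mulVec (y v - (A v).mulVec (X v)) i))) := by
          funext i
          rw [avg_pmat E d (avg (Pmat E d) X) v i]
        rw [hX']
        simp only [Gamma]
        rw [harg]
      simp only [enorm2_sq]
      exact gcol_min (A v) (y v) q α τ hτpos (le_of_lt hα) d hdne _ (hreg v)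
        (avg (Pmat E d) X) (X v) (X' v) (X v) hX'v
    -- step C : F(X') = FS(X'; avg X', X') ≤ FS(X'; avg X, X)
    have stepC : Flasso (Pmat E d) A y q α (fun _ => τ) X'
        ≤ FS E d A y q α (fun _ => τ) X' (avg (Pmat E d) X) X := by
      rw [← FS_eq_Flasso E d hdne A y q α τ hτne X']
      have e1 : FS E d A y q α (fun _ => τ) X' (avg (Pmat E d) X') X'
          = ∑ v, ((q * esq ((A v).mulVec (X' v) - y v) + (2 * α / τ) * onenorm (X' v))
            + ((1-q)/((d:ℝ)*τ)) * ∑ w ∈ Finset.univ.filter (fun w => E v w),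
                esq (X' v - avg (Pmat E d) X' w)) := by
        unfold FS
        apply Finset.sum_congr rfl
        intro v _
        simp only [enorm2_sq, sub_self, Matrix.mulVec_zero, esq_zero]
        ring
      have e2 : FS E d A y q α (fun _ => τ) X' (avg (Pmat E d) X) X
          = ∑ v, ((q * esq ((A v).mulVec (X' v) - y v) + (2 * α / τ) * onenorm (X' v))
            + ((1-q)/((d:ℝ)*τ)) * ∑ w ∈ Finset.univ.filter (fun w => E v w),
                esq (X' v - avg (Pmat E d) X w))
            + ∑ v, ((q/τ) * esq (X' v - X v) - q * esq ((A v).mulVec (X' v - X v))) := by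
        unfold FS
        rw [← Finset.sum_add_distrib]
        apply Finset.sum_congr rfl
        intro v _
        simp only [enorm2_sq]
        ring
      have hpos : ∀ v, 0 ≤ (q/τ) * esq (X' v - X v) - q * esq ((A v).mulVec (X' v - X v)) := by
        intro v
        have h := tau_esq_le (A v) hτpos (hτ v) (X' v - X v)
        have h2 : (q/τ) * (τ * esq ((A v).mulVec (X' v - X v)))
            = q * esq ((A v).mulVec (X' v - X v)) := by field_simp
        have h3 := mul_le_mul_of_nonneg_left h (le_of_lt (div_pos hq0 hτpos))
        linarith
      have hcoup : ∑ v, ∑ w ∈ Finset.univ.filter (fun w => E v w), esq (X' v - avg (Pmat E d) X' w)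
          ≤ ∑ v, ∑ w ∈ Finset.univ.filter (fun w => E v w), esq (X' v - avg (Pmat E d) X w) := by
        conv_lhs => rw [filter_swap E hsymm (fun v w => esq (X' v - avg (Pmat E d) X' w))]
        conv_rhs => rw [filter_swap E hsymm (fun v w => esq (X' v - avg (Pmat E d) X w))]
        apply Finset.sum_le_sum
        intro w _
        simp only [esq, Pi.sub_apply]
        calc ∑ v ∈ Finset.univ.filter (fun v => E w v), ∑ i, (X' v i - avg (Pmat E d) X' w i)^2
            = ∑ i, ∑ v ∈ Finset.univ.filter (fun v => E w v), (X' v i - avg (Pmat E d) X' w i)^2 :=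
              Finset.sum_comm (s := Finset.univ.filter (fun v => E w v)) (t := Finset.univ)
                (f := fun v i => (X' v i - avg (Pmat E d) X' w i)^2)
          _ ≤ ∑ i, ∑ v ∈ Finset.univ.filter (fun v => E w v), (X' v i - avg (Pmat E d) X w i)^2 := by
              apply Finset.sum_le_sum
              intro i _
              apply variance_min _ d (hreg w) (fun v => X' v i) _ _
              rw [avg_pmat E d X' w i, ← mul_assoc, mul_one_div_cancel hdne, one_mul]
          _ = ∑ v ∈ Finset.univ.filter (fun v => E w v), ∑ i, (X' v i - avg (Pmat E d) X w i)^2 :=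
              (Finset.sum_comm (s := Finset.univ.filter (fun v => E w v)) (t := Finset.univ)
                (f := fun v i => (X' v i - avg (Pmat E d) X w i)^2)).symm
      have split1 : ∑ v, ((q * esq ((A v).mulVec (X' v) - y v) + (2 * α / τ) * onenorm (X' v))
            + ((1-q)/((d:ℝ)*τ)) * ∑ w ∈ Finset.univ.filter (fun w => E v w),
                esq (X' v - avg (Pmat E d) X' w))
          = (∑ v, (q * esq ((A v).mulVec (X' v) - y v) + (2 * α / τ) * onenorm (X' v)))
            + ((1-q)/((d:ℝ)*τ)) * ∑ v, ∑ w ∈ Finset.univ.filter (fun w => E v w),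
                esq (X' v - avg (Pmat E d) X' w) := by
        rw [Finset.sum_add_distrib, ← Finset.mul_sum]
      have split2 : ∑ v, ((q * esq ((A v).mulVec (X' v) - y v) + (2 * α / τ) * onenorm (X' v))
            + ((1-q)/((d:ℝ)*τ)) * ∑ w ∈ Finset.univ.filter (fun w => E v w),
                esq (X' v - avg (Pmat E d) X w))
          = (∑ v, (q * esq ((A v).mulVec (X' v) - y v) + (2 * α / τ) * onenorm (X' v)))
            + ((1-q)/((d:ℝ)*τ)) * ∑ v, ∑ w ∈ Finset.univ.filter (fun w => E v w),
                esq (X' v - avg (Pmat E d) X w) := by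
        rw [Finset.sum_add_distrib, ← Finset.mul_sum]
      rw [e1, e2, split1, split2]
      have hc3 : (0:ℝ) ≤ (1-q)/((d:ℝ)*τ) := div_nonneg (by linarith) (by positivity)
      have hposs : 0 ≤ ∑ v, ((q/τ) * esq (X' v - X v) - q * esq ((A v).mulVec (X' v - X v))) :=
        Finset.sum_nonneg fun v _ => hpos v
      have hmul := mul_le_mul_of_nonneg_left hcoup hc3
      linarith
    calc Flasso (Pmat E d) A y q α (fun _ => τ) X'
        ≤ FS E d A y q α (fun _ => τ) X' (avg (Pmat E d) X) X := stepC
      _ ≤ FS E d A y q α (fun _ => τ) X (avg (Pmat E d) X) X := stepB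
      _ = Flasso (Pmat E d) A y q α (fun _ => τ) X := FS_eq_Flasso E d hdne A y q α τ hτne X
  have hFnn : ∀ X : V → Fin n → ℝ, 0 ≤ Flasso (Pmat E d) A y q α (fun _ => τ) X := by
    intro X
    apply Finset.sum_nonneg
    intro v _
    have h1 : 0 ≤ q * enorm2 (y v - (A v).mulVec (X v)) ^ 2 :=
      mul_nonneg (le_of_lt hq0) (sq_nonneg _)
    have h2 : 0 ≤ (2 * α / τ) * onenorm (X v) := by
      apply mul_nonneg (div_nonneg (by linarith) (le_of_lt hτpos))
      exact Finset.sum_nonneg fun i _ => abs_nonneg _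
    have h3 : 0 ≤ ((1 - q) / τ) * ∑ w, Pmat E d v w * enorm2 (avg (Pmat E d) X w - X v) ^ 2 := by
      apply mul_nonneg (div_nonneg (by linarith) (le_of_lt hτpos))
      apply Finset.sum_nonneg
      intro w _
      apply mul_nonneg _ (sq_nonneg _)
      unfold Pmat
      split
      · positivity
      · exact le_rfl
    linarith
  refine ⟨main, fun X0 => ?_⟩
  have hanti : Antitone (fun t : ℕ =>
      Flasso (Pmat E d) A y q α (fun _ => τ)
        ((Gamma (Pmat E d) A y q α (fun _ => τ))^[t] X0)) := by
    apply antitone_nat_of_succ_le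
    intro t
    rw [Function.iterate_succ_apply']
    exact main _
  have hnn : ∀ t : ℕ, 0 ≤ Flasso (Pmat E d) A y q α (fun _ => τ)
      ((Gamma (Pmat E d) A y q α (fun _ => τ))^[t] X0) := fun t => hFnn _
  exact ⟨hanti, hnn, ⟨_, tendsto_atTop_ciInf hanti ⟨0, fun x ⟨t, ht⟩ => ht ▸ hnn t⟩⟩⟩
end
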